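/- Let Φ denote the standard normal cdf, α = √((N−1)/(N−2)) with N ≥ 3, and β ∈ ℝ with |β| ≤ (1/2)/√((N−2)σ²) where σ² = 1/12. Then for all x ≤ 0 ≤ αx + β (i.e., the case y < 0 < x or x < 0 < y of the paper), |Φ(αx+β) − Φ(x)| ≤ 1/(2√(2π(N−2)σ²)). -/

import Mathlib

open MeasureTheory ProbabilityTheory Real

/-- The standard normal cumulative distribution function. -/
noncomputable def stdNormalCdf (x : ℝ) : ℝ :=
  ((gaussianReal 0 1) (Set.Iic x)).toReal

/-! Since `α ≥ 1` and `x ≤ 0`, we have `αx ≤ x ≤ αx + β`, so by monotonicity of `Φ`,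
`0 ≤ Φ(αx + β) - Φ(x) ≤ Φ(αx + β) - Φ(αx)`. The standard normal density is bounded by
`1/√(2π)`, so the last difference is at most `β/√(2π)`, which the bound on `β` turns into
`1/(2√(2π(N-2)σ²))`. -/

namespace ProbabilityTheory

lemma gaussianPDFReal_le_inv_sqrt (μ : ℝ) (v : NNReal) (x : ℝ) :
    gaussianPDFReal μ v x ≤ (√(2 * π * v))⁻¹ := by
  rw [gaussianPDFReal]
  refine mul_le_of_le_one_right (by positivity) (exp_le_one_iff.2 ?_)
  exact div_nonpos_of_nonpos_of_nonneg (neg_nonpos.2 (sq_nonneg _)) (by positivity)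

lemma gaussianReal_le_mul_volume (μ : ℝ) {v : NNReal} (hv : v ≠ 0) (s : Set ℝ) :
    gaussianReal μ v s ≤ ENNReal.ofReal (√(2 * π * v))⁻¹ * volume s := by
  rw [gaussianReal_apply μ hv, ← setLIntegral_const]
  exact lintegral_mono fun x ↦ ENNReal.ofReal_le_ofReal (gaussianPDFReal_le_inv_sqrt μ v x)

end ProbabilityTheory

lemma stdNormalCdf_eq_cdf : stdNormalCdf = cdf (gaussianReal 0 1) := by
  ext x
  rw [cdf_eq_real, measureReal_def, stdNormalCdf]

lemma stdNormalCdf_mono : Monotone stdNormalCdf :=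
  stdNormalCdf_eq_cdf ▸ monotone_cdf _

lemma stdNormalCdf_sub_le {a b : ℝ} (hab : a ≤ b) :
    stdNormalCdf b - stdNormalCdf a ≤ (b - a) / √(2 * π) := by
  have hIoc :
      gaussianReal 0 1 (Set.Ioc a b) = ENNReal.ofReal (stdNormalCdf b - stdNormalCdf a) := by
    rw [stdNormalCdf_eq_cdf, ← StieltjesFunction.measure_Ioc, measure_cdf]
  have hle := gaussianReal_le_mul_volume 0 one_ne_zero (Set.Ioc a b)
  rw [hIoc, volume_Ioc, ← ENNReal.ofReal_mul (by positivity),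
    ENNReal.ofReal_le_ofReal_iff (by positivity)] at hle
  simpa [div_eq_inv_mul] using hle

/-- Bound on the shift term `II(x)` in the case `x ≤ 0 ≤ αx + β`. -/
theorem stmt17 (N : ℕ) (hN : 3 ≤ N) (β x : ℝ)
    (hβ : |β| ≤ (1 / 2) / Real.sqrt (((N : ℝ) - 2) * (1 / 12)))
    (hx : x ≤ 0) (hy : 0 ≤ Real.sqrt (((N : ℝ) - 1) / ((N : ℝ) - 2)) * x + β) :
    |stdNormalCdf (Real.sqrt (((N : ℝ) - 1) / ((N : ℝ) - 2)) * x + β) - stdNormalCdf x|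
      ≤ 1 / (2 * Real.sqrt (2 * π * ((N : ℝ) - 2) * (1 / 12))) := by
  set α := √(((N : ℝ) - 1) / ((N : ℝ) - 2))
  have hα : 1 ≤ α := by
    have hN' : (3 : ℝ) ≤ N := by exact_mod_cast hN
    exact one_le_sqrt.2 ((one_le_div (by linarith)).2 (by linarith))
  have hαx : α * x ≤ x := by nlinarith
  rw [abs_of_nonneg (sub_nonneg.2 (stdNormalCdf_mono (hx.trans hy)))]
  calc stdNormalCdf (α * x + β) - stdNormalCdf x
      ≤ stdNormalCdf (α * x + β) - stdNormalCdf (α * x) := by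
        gcongr; exact stdNormalCdf_mono hαx
    _ ≤ β / √(2 * π) := by
        simpa using stdNormalCdf_sub_le (hαx.trans (hx.trans hy))
    _ ≤ (1 / 2) / √(((N : ℝ) - 2) * (1 / 12)) / √(2 * π) := by
        gcongr; exact (le_abs_self β).trans hβ
    _ = 1 / (2 * √(2 * π * ((N : ℝ) - 2) * (1 / 12))) := by
        rw [mul_assoc (2 * π), sqrt_mul (x := 2 * π) (by positivity)]
        ring
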